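/- arXiv:2403.18517 — 7 statements merged into one kernel-verified Lean document; each statement's English description precedes it below -/
import Mathlib

section
/- Let n ≥ 1, and for each i ≤ n let p_i > 0 and a_i > 0. The minimum of ∑_{i=1}^n λ_i^{p_i} a_i over positive reals λ_1,...,λ_n subject to ∏_{i=1}^n λ_i = 1 is attained at λ_i* = (β/(p_i a_i))^{1/p_i}, where β = (∏_{i≤n} (p_i a_i)^{1/p_i})^{1/(∑_{i≤n} 1/p_i)}. -/
open Finset

theorem stmt0 {n : ℕ} (hn : 1 ≤ n) (p a : Fin n → ℝ)
    (hp : ∀ i, 0 < p i) (ha : ∀ i, 0 < a i) :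
    let β : ℝ := (∏ i, (p i * a i) ^ (1 / p i)) ^ (1 / ∑ i, 1 / p i)
    let lam : Fin n → ℝ := fun i => (β / (p i * a i)) ^ (1 / p i)
    (∀ i, 0 < lam i) ∧ (∏ i, lam i = 1) ∧
      ∀ μ : Fin n → ℝ, (∀ i, 0 < μ i) → (∏ i, μ i = 1) →
        ∑ i, lam i ^ p i * a i ≤ ∑ i, μ i ^ p i * a i := by
  have hpa : ∀ i, 0 < p i * a i := fun i => mul_pos (hp i) (ha i)
  have hne : (Finset.univ : Finset (Fin n)).Nonempty := ⟨⟨0, hn⟩, mem_univ _⟩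
  set S : ℝ := ∑ i, 1 / p i with hSdef
  have hS : 0 < S := Finset.sum_pos (fun i _ => one_div_pos.mpr (hp i)) hne
  set P : ℝ := ∏ i, (p i * a i) ^ (1 / p i) with hPdef
  have hP : 0 < P := Finset.prod_pos fun i _ => Real.rpow_pos_of_pos (hpa i) _
  intro β lam
  have hβ : 0 < β := Real.rpow_pos_of_pos hP _
  have hβS : β ^ S = P := by
    show (P ^ (1 / S)) ^ S = P
    rw [← Real.rpow_mul hP.le, one_div, inv_mul_cancel₀ hS.ne', Real.rpow_one]
  have hlam : ∀ i, 0 < lam i :=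
    fun i => Real.rpow_pos_of_pos (div_pos hβ (hpa i)) _
  have hlampow : ∀ i, lam i ^ p i = β / (p i * a i) := by
    intro i
    show ((β / (p i * a i)) ^ (1 / p i)) ^ p i = _
    rw [← Real.rpow_mul (div_pos hβ (hpa i)).le, one_div,
      inv_mul_cancel₀ (hp i).ne', Real.rpow_one]
  refine ⟨hlam, ?_, ?_⟩
  · show ∏ i, (β / (p i * a i)) ^ (1 / p i) = 1
    have : ∀ i ∈ Finset.univ, (β / (p i * a i)) ^ (1 / p i)
        = β ^ (1 / p i) / (p i * a i) ^ (1 / p i) :=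
      fun i _ => Real.div_rpow hβ.le (hpa i).le _
    rw [Finset.prod_congr rfl this, Finset.prod_div_distrib,
      ← Real.rpow_sum_of_pos hβ, ← hSdef, hβS, ← hPdef, div_self hP.ne']
  · intro μ hμ hμ1
    have hsum : ∑ i, lam i ^ p i * a i = β * S := by
      rw [Finset.mul_sum]
      refine Finset.sum_congr rfl fun i _ => ?_
      rw [hlampow i]
      field_simp
      rw [mul_comm (p i) (a i), ← div_div, div_self (ha i).ne']
    rw [hsum]
    -- weights
    set w : Fin n → ℝ := fun i => 1 / p i / S with hwdef
    have hw : ∀ i, 0 < w i := fun i => div_pos (one_div_pos.mpr (hp i)) hS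
    have hw1 : ∑ i, w i = 1 := by
      rw [hwdef, ← Finset.sum_div, ← hSdef, div_self hS.ne']
    set z : Fin n → ℝ := fun i => μ i ^ p i * a i / w i with hzdef
    have hz : ∀ i, 0 < z i :=
      fun i => div_pos (mul_pos (Real.rpow_pos_of_pos (hμ i) _) (ha i)) (hw i)
    have key : ∏ i, z i ^ w i ≤ ∑ i, w i * z i :=
      Real.geom_mean_le_arith_mean_weighted _ w z (fun i _ => (hw i).le) hw1
        (fun i _ => (hz i).le)
    have hrhs : ∑ i, w i * z i = ∑ i, μ i ^ p i * a i := by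
      refine Finset.sum_congr rfl fun i _ => ?_
      show w i * (μ i ^ p i * a i / w i) = _
      rw [mul_comm, div_mul_cancel₀ _ (hw i).ne']
    have hlhs : ∏ i, z i ^ w i = β * S := by
      have hzi : ∀ i, z i = μ i ^ p i * ((p i * a i) * S) := by
        intro i
        rw [hzdef, hwdef]
        field_simp
      have step : ∀ i ∈ Finset.univ, z i ^ w i
          = μ i ^ (1 / S) * (((p i * a i) ^ (1 / p i)) ^ (1 / S) * S ^ w i) := by
        intro i _
        rw [hzi i, Real.mul_rpow (Real.rpow_pos_of_pos (hμ i) _).le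
          (mul_pos (hpa i) hS).le, Real.mul_rpow (hpa i).le hS.le,
          ← Real.rpow_mul (hμ i).le, ← Real.rpow_mul (hpa i).le]
        congr 2
        all_goals rw [hwdef]; field_simp
        all_goals try rw [div_self (mul_pos (hp i) hS).ne']
        all_goals rw [div_self (hp i).ne']
      rw [Finset.prod_congr rfl step, Finset.prod_mul_distrib,
        Finset.prod_mul_distrib,
        Real.finset_prod_rpow _ _ (fun i _ => (hμ i).le),
        Real.finset_prod_rpow _ _ (fun i _ => (Real.rpow_pos_of_pos (hpa i) _).le),
        ← Real.rpow_sum_of_pos hS, hμ1, hw1, Real.one_rpow, Real.rpow_one,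
        ← hPdef, one_mul, mul_comm]
    calc β * S = ∏ i, z i ^ w i := hlhs.symm
      _ ≤ ∑ i, w i * z i := key
      _ = _ := hrhs
end

section
/- Let n ≥ 1, p_i > 0 and a_i > 0 for i ≤ n. If λ_i = 1 for all i is a minimizer of ∑_{i=1}^n λ_i^{p_i} a_i subject to ∏_{i=1}^n λ_i = 1 and λ_i > 0, then p_i a_i = p_j a_j for all i, j ≤ n, and this common value equals the weighted geometric mean β = (∏_{i≤n} (p_i a_i)^{1/p_i})^{1/(∑_{i≤n} 1/p_i)}. -/
/-!
Moving mass between two coordinates, `λ = (…, t, …, t⁻¹, …)`, keeps the constraint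
`∏ λᵢ = 1`, so optimality of `λ = 1` makes `t ↦ t ^ pᵢ * aᵢ + t ^ (-pⱼ) * aⱼ` locally minimal
at `t = 1`; its derivative there, `pᵢ aᵢ - pⱼ aⱼ`, vanishes. Once all `pᵢ aᵢ` equal a common
`c > 0`, the weighted geometric mean is `(c ^ ∑ 1/pⱼ) ^ (1 / ∑ 1/pⱼ) = c`.
-/

open Finset

section Update

open Function

variable {ι : Type*} [Fintype ι] [DecidableEq ι]

theorem Fintype.sum_update_eq_add_sub {M : Type*} [AddCommGroup M] (f : ι → M) (i : ι) (b : M) :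
    ∑ k, update f i b k = ∑ k, f k + (b - f i) := by
  rw [sum_update_of_mem (mem_univ i), sum_eq_add_sum_sdiff_singleton_of_mem (mem_univ i) f]
  abel

theorem Fintype.sum_apply_update_update {α M : Type*} [AddCommGroup M] (g : ι → α → M)
    (f : ι → α) {i j : ι} (hij : i ≠ j) (x y : α) :
    ∑ k, g k (update (update f i x) j y k) =
      ∑ k, g k (f k) + (g i x - g i (f i)) + (g j y - g j (f j)) := by
  have hupd : (fun k => g k (update (update f i x) j y k)) =
      update (update (fun k => g k (f k)) i (g i x)) j (g j y) := by
    ext k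
    simp only [update_apply]
    split_ifs <;> simp_all
  rw [hupd, sum_update_eq_add_sub, sum_update_eq_add_sub, update_of_ne hij.symm]

theorem Fintype.prod_update_update_one {M : Type*} [CommMonoid M] {i j : ι} (hij : i ≠ j)
    (x y : M) : ∏ k, update (update (1 : ι → M) i x) j y k = x * y := by
  have hi : i ∈ univ \ {j} := by simp [hij]
  rw [prod_update_of_mem (mem_univ j), prod_update_of_mem hi]
  simp [mul_comm]

end Update

theorem Real.mul_eq_mul_of_isLocalMin_rpow_add_rpow_neg {c d p q : ℝ}
    (h : IsLocalMin (fun t : ℝ => t ^ p * c + t ^ (-q) * d) 1) : p * c = q * d := by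
  have hderiv : HasDerivAt (fun t : ℝ => t ^ p * c + t ^ (-q) * d)
      (p * 1 ^ (p - 1) * c + -q * 1 ^ (-q - 1) * d) 1 :=
    ((Real.hasDerivAt_rpow_const (Or.inl one_ne_zero)).mul_const c).add
      ((Real.hasDerivAt_rpow_const (Or.inl one_ne_zero)).mul_const d)
  have hzero := h.hasDerivAt_eq_zero hderiv
  simp only [Real.one_rpow, mul_one] at hzero
  linarith

theorem isLocalMin_rpow_add_rpow_neg_of_forall_prod_eq_one {ι : Type*} [Fintype ι]
    {p a : ι → ℝ}
    (hmin : ∀ μ : ι → ℝ, (∀ i, 0 < μ i) → (∏ i, μ i = 1) →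
      ∑ i, (1 : ℝ) ^ p i * a i ≤ ∑ i, μ i ^ p i * a i)
    {i j : ι} (hij : i ≠ j) :
    IsLocalMin (fun t : ℝ => t ^ p i * a i + t ^ (-p j) * a j) 1 := by
  classical
  filter_upwards [Ioi_mem_nhds one_pos] with t (ht : 0 < t)
  let μ := Function.update (Function.update (1 : ι → ℝ) i t) j t⁻¹
  have hμ_pos : ∀ k, 0 < μ k := by
    intro k
    simp only [μ, Function.update_apply]
    split_ifs <;> simp [ht]
  have hle := hmin μ hμ_pos (by rw [Fintype.prod_update_update_one hij, mul_inv_cancel₀ ht.ne'])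
  rw [Fintype.sum_apply_update_update (fun k x => x ^ p k * a k) 1 hij] at hle
  rw [Real.inv_rpow ht.le, ← Real.rpow_neg ht.le] at hle
  simp only [Pi.one_apply, Real.one_rpow, one_mul] at hle ⊢
  linarith

theorem Real.prod_rpow_rpow_one_div_sum {ι : Type*} (s : Finset ι) {c : ℝ} (hc : 0 < c)
    {w : ι → ℝ} (hw : ∑ j ∈ s, w j ≠ 0) :
    (∏ j ∈ s, c ^ w j) ^ (1 / ∑ j ∈ s, w j) = c := by
  rw [← Real.rpow_sum_of_pos hc, ← Real.rpow_mul hc.le, mul_one_div_cancel hw, Real.rpow_one]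

theorem stmt1 {n : ℕ} (hn : 1 ≤ n) (p a : Fin n → ℝ)
    (hp : ∀ i, 0 < p i) (ha : ∀ i, 0 < a i)
    (hmin : ∀ μ : Fin n → ℝ, (∀ i, 0 < μ i) → (∏ i, μ i = 1) →
      ∑ i, (1 : ℝ) ^ p i * a i ≤ ∑ i, μ i ^ p i * a i) :
    (∀ i j, p i * a i = p j * a j) ∧
      ∀ i, p i * a i =
        (∏ j, (p j * a j) ^ (1 / p j)) ^ (1 / ∑ j, 1 / p j) := by
  have hbalance : ∀ i j, p i * a i = p j * a j := by
    intro i j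
    rcases eq_or_ne i j with rfl | hij
    · rfl
    · exact Real.mul_eq_mul_of_isLocalMin_rpow_add_rpow_neg
        (isLocalMin_rpow_add_rpow_neg_of_forall_prod_eq_one hmin hij)
  refine ⟨hbalance, fun i => ?_⟩
  have : Nonempty (Fin n) := ⟨⟨0, hn⟩⟩
  have hsum : ∑ j, 1 / p j ≠ 0 := (sum_pos (fun j _ => one_div_pos.mpr (hp j)) univ_nonempty).ne'
  calc p i * a i = (∏ j, (p i * a i) ^ (1 / p j)) ^ (1 / ∑ j, 1 / p j) :=
        (Real.prod_rpow_rpow_one_div_sum univ (mul_pos (hp i) (ha i)) hsum).symm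
    _ = (∏ j, (p j * a j) ^ (1 / p j)) ^ (1 / ∑ j, 1 / p j) := by
        simp_rw [hbalance _ i]
end

section
/- For all n ≥ 1 and all positive p_i, a_i (i ≤ n), the constrained minimum of ∑_{i=1}^n λ_i^{p_i} a_i over positive λ_i with ∏ λ_i = 1 equals (∑_{i=1}^n 1/p_i) · (∏_{i=1}^n (p_i a_i)^{1/p_i})^{1/(∑_{i=1}^n 1/p_i)}. -/
open Finset

theorem stmt2 {n : ℕ} (hn : 1 ≤ n) (p a : Fin n → ℝ)
    (hp : ∀ i, 0 < p i) (ha : ∀ i, 0 < a i) :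
    IsLeast {x : ℝ | ∃ lam : Fin n → ℝ, (∀ i, 0 < lam i) ∧ (∏ i, lam i = 1) ∧
        x = ∑ i, lam i ^ p i * a i}
      ((∑ i, 1 / p i) *
        (∏ i, (p i * a i) ^ (1 / p i)) ^ (1 / ∑ i, 1 / p i)) := by
  have hpa : ∀ i, 0 < p i * a i := fun i => mul_pos (hp i) (ha i)
  set S : ℝ := ∑ i, 1 / p i with hS
  have hSpos : 0 < S := by
    apply Finset.sum_pos (fun i _ => by have := hp i; positivity)
    exact Finset.univ_nonempty_iff.mpr (Fin.pos_iff_nonempty.mp hn)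
  set G : ℝ := ∏ i, (p i * a i) ^ (1 / p i) with hG
  have hGpos : 0 < G := Finset.prod_pos fun i _ => Real.rpow_pos_of_pos (hpa i) _
  set c : ℝ := G ^ (1 / S) with hc
  have hcpos : 0 < c := Real.rpow_pos_of_pos hGpos _
  constructor
  · refine ⟨fun i => (c / (p i * a i)) ^ (1 / p i),
      fun i => Real.rpow_pos_of_pos (div_pos hcpos (hpa i)) _, ?_, ?_⟩
    · have h1 : ∏ i, (c / (p i * a i)) ^ (1 / p i)
          = (∏ i, c ^ (1 / p i)) / ∏ i, (p i * a i) ^ (1 / p i) := by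
        rw [← Finset.prod_div_distrib]
        exact Finset.prod_congr rfl fun i _ => Real.div_rpow hcpos.le (hpa i).le _
      rw [h1, ← Real.rpow_sum_of_pos hcpos, ← hS, ← hG, hc,
        ← Real.rpow_mul hGpos.le, one_div, inv_mul_cancel₀ hSpos.ne', Real.rpow_one,
        div_self hGpos.ne']
    · have h2 : ∀ i, ((c / (p i * a i)) ^ (1 / p i)) ^ p i * a i = c * (1 / p i) := by
        intro i
        rw [← Real.rpow_mul (div_pos hcpos (hpa i)).le, one_div_mul_cancel (hp i).ne',
          Real.rpow_one]
        field_simp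
        rw [div_eq_div_iff (hpa i).ne' (hp i).ne']; ring
      rw [Finset.sum_congr rfl fun i _ => h2 i, ← Finset.mul_sum, ← hS]
      ring
  · rintro x ⟨lam, hlam, hprod, rfl⟩
    set w : Fin n → ℝ := fun i => 1 / (p i * S) with hw_def
    set z : Fin n → ℝ := fun i => p i * a i * lam i ^ p i with hz_def
    have hw : ∀ i ∈ univ, (0:ℝ) ≤ w i := fun i _ => by
      have := hp i; positivity
    have hw' : ∑ i, w i = 1 := by
      have h3 : ∀ i, w i = (1 / p i) * (1 / S) := by
        intro i
        rw [hw_def]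
        rw [one_div_mul_one_div]
      rw [Finset.sum_congr rfl fun i _ => h3 i, ← Finset.sum_mul, ← hS]
      field_simp
    have hz : ∀ i ∈ univ, (0:ℝ) ≤ z i := fun i _ => by
      have h1 := hpa i
      have h2 : (0:ℝ) ≤ lam i ^ p i := Real.rpow_nonneg (hlam i).le _
      positivity
    have key := Real.geom_mean_le_arith_mean_weighted univ w z hw hw' hz
    have hL : ∏ i, z i ^ w i = c := by
      have h4 : ∀ i, z i ^ w i = ((p i * a i) ^ (1 / p i)) ^ (1 / S) * lam i ^ (1 / S) := by
        intro i
        simp only [hz_def, hw_def]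
        rw [Real.mul_rpow (hpa i).le (Real.rpow_nonneg (hlam i).le _),
          ← Real.rpow_mul (hlam i).le, ← Real.rpow_mul (hpa i).le, one_div_mul_one_div,
          show p i * (1 / (p i * S)) = 1 / S by
            rw [one_div, mul_inv, ← mul_assoc, mul_inv_cancel₀ (hp i).ne', one_mul, one_div]]
      rw [Finset.prod_congr rfl fun i _ => h4 i, Finset.prod_mul_distrib,
        Real.finset_prod_rpow _ _ (fun i _ => (Real.rpow_pos_of_pos (hpa i) _).le) _,
        Real.finset_prod_rpow _ _ (fun i _ => (hlam i).le) _,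
        hprod, Real.one_rpow, mul_one, hc, hG]
    have hR : ∑ i, w i * z i = (∑ i, lam i ^ p i * a i) * (1 / S) := by
      rw [Finset.sum_mul]
      refine Finset.sum_congr rfl fun i _ => ?_
      simp only [hw_def, hz_def]
      field_simp [(hp i).ne', hSpos.ne']
    rw [hL, hR, mul_one_div] at key
    rw [mul_comm]
    exact (le_div_iff₀ hSpos).mp key
end

section
/- Let f : ℝ^{m₁×r} × ℝ^{m₂×r} → ℝ₊ be continuous and scale-invariant, meaning f(X₁Λ, X₂Λ⁻¹) = f(X₁, X₂) for every positive diagonal matrix Λ. Let g : ℝ^{m₁×r} → ℝ₊ be positive homogeneous of degree p > 0 and positive-definite (g(X) = 0 iff X = 0), and let μ > 0. Then inf over (X₁, X₂) of f(X₁, X₂) + μ g(X₁) equals inf over (X₁, X₂) of f(X₁, X₂). -/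
theorem stmt8 {m₁ m₂ r : ℕ}
    (f : Matrix (Fin m₁) (Fin r) ℝ → Matrix (Fin m₂) (Fin r) ℝ → ℝ)
    (hf0 : ∀ X₁ X₂, 0 ≤ f X₁ X₂)
    (hfc : Continuous fun P : Matrix (Fin m₁) (Fin r) ℝ × Matrix (Fin m₂) (Fin r) ℝ =>
      f P.1 P.2)
    (hinv : ∀ X₁ X₂ (d : Fin r → ℝ), (∀ q, 0 < d q) →
      f (X₁ * Matrix.diagonal d) (X₂ * Matrix.diagonal fun q => (d q)⁻¹) = f X₁ X₂)
    (g : Matrix (Fin m₁) (Fin r) ℝ → ℝ) (p : ℝ) (hp : 0 < p)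
    (hg0 : ∀ X, 0 ≤ g X)
    (hgh : ∀ c : ℝ, 0 < c → ∀ X, g (c • X) = c ^ p * g X)
    (hgd : ∀ X, g X = 0 ↔ X = 0)
    (μ : ℝ) (hμ : 0 < μ) :
    sInf {y : ℝ | ∃ X₁ X₂, y = f X₁ X₂ + μ * g X₁} =
      sInf {y : ℝ | ∃ X₁ X₂, y = f X₁ X₂} := by
  set T := {y : ℝ | ∃ X₁ X₂, y = f X₁ X₂ + μ * g X₁} with hT
  set S := {y : ℝ | ∃ X₁ X₂, y = f X₁ X₂} with hS
  have hSne : S.Nonempty := ⟨f 0 0, 0, 0, rfl⟩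
  have hTbdd : BddBelow T := by
    refine ⟨0, ?_⟩
    rintro y ⟨X₁, X₂, rfl⟩
    exact add_nonneg (hf0 _ _) (mul_nonneg hμ.le (hg0 _))
  have hdiag : ∀ c : ℝ, (Matrix.diagonal (fun _ : Fin r => c))
      = c • (1 : Matrix (Fin r) (Fin r) ℝ) := by
    intro c
    ext i j
    by_cases h : i = j <;>
      simp [Matrix.diagonal, Matrix.one_apply, h]
  have key : ∀ X₁ X₂ (c : ℝ), 0 < c → f X₁ X₂ + μ * (c ^ p * g X₁) ∈ T := by
    intro X₁ X₂ c hc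
    refine ⟨c • X₁, c⁻¹ • X₂, ?_⟩
    have h1 : X₁ * Matrix.diagonal (fun _ : Fin r => c) = c • X₁ := by
      rw [hdiag, Matrix.mul_smul, Matrix.mul_one]
    have h2 : X₂ * Matrix.diagonal (fun _ : Fin r => c⁻¹) = c⁻¹ • X₂ := by
      rw [hdiag, Matrix.mul_smul, Matrix.mul_one]
    have := hinv X₁ X₂ (fun _ => c) (fun _ => hc)
    rw [h1, h2] at this
    rw [this, hgh c hc X₁]
  refine le_antisymm ?_ ?_
  · -- sInf T ≤ sInf S
    refine le_csInf hSne ?_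
    rintro y ⟨X₁, X₂, rfl⟩
    refine le_of_forall_pos_le_add ?_
    intro ε hε
    by_cases hg : g X₁ = 0
    · have h := csInf_le hTbdd (key X₁ X₂ 1 one_pos)
      rw [hg] at h
      simp at h
      linarith
    · have hgpos : 0 < g X₁ := (hg0 X₁).lt_of_ne (Ne.symm hg)
      set c : ℝ := (ε / (μ * g X₁)) ^ p⁻¹ with hc
      have hpos : 0 < ε / (μ * g X₁) := div_pos hε (mul_pos hμ hgpos)
      have hcpos : 0 < c := Real.rpow_pos_of_pos hpos _
      have hcp : c ^ p = ε / (μ * g X₁) :=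
        Real.rpow_inv_rpow hpos.le hp.ne'
      have h := csInf_le hTbdd (key X₁ X₂ c hcpos)
      rw [hcp] at h
      have : μ * (ε / (μ * g X₁) * g X₁) = ε := by
        field_simp
      rw [this] at h
      exact h
  · -- sInf S ≤ sInf T
    have hTne : T.Nonempty := ⟨f 0 0 + μ * g 0, 0, 0, rfl⟩
    refine le_csInf hTne ?_
    rintro y ⟨X₁, X₂, rfl⟩
    have hSbdd : BddBelow S := ⟨0, by rintro y ⟨A, B, rfl⟩; exact hf0 _ _⟩
    have h1 : sInf S ≤ f X₁ X₂ := csInf_le hSbdd ⟨X₁, X₂, rfl⟩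
    nlinarith [mul_nonneg hμ.le (hg0 X₁)]
end

section
/- Under the assumptions of the previous statement (f continuous, nonnegative, scale-invariant; g positive homogeneous of degree p > 0 and positive-definite; μ > 0), if the infimum of f(X₁, X₂) + μ g(X₁) is attained at (X₁*, X₂*), then X₁* = 0 and f(0, X₂*) = f(0, 0) equals the infimum of f. -/
/-!
Rescaling `(X₁, X₂) ↦ (c X₁, c⁻¹ X₂)` leaves `f` unchanged and multiplies `g X₁` by `c ^ p`,
which sweeps out every positive factor `t`. So the minimal value `v` of `f + μ g` satisfies
`v ≤ f X₁ X₂ + t μ g X₁` for all `t > 0`; letting `t → 0` gives `v ≤ inf f`, and at the minimiser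
itself, comparing `t → 0` with `t = 2`, it forces `g X₁* = 0`, i.e. `X₁* = 0`. Finally
`c ↦ f 0 (c X₂*)` is constant on `c > 0` and continuous at `0`, so `f 0 X₂* = f 0 0`.
-/

open Filter Topology

lemma le_of_forall_pos_le_add_mul {a b c : ℝ} (h : ∀ t > 0, a ≤ b + t * c) : a ≤ b := by
  have hlim : Tendsto (fun t : ℝ => b + t * c) (𝓝[>] 0) (𝓝 b) := by
    have : Tendsto (fun t : ℝ => b + t * c) (𝓝 0) (𝓝 (b + 0 * c)) :=
      ((continuous_id.mul continuous_const).const_add b).tendsto 0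
    simpa using this.mono_left nhdsWithin_le_nhds
  exact ge_of_tendsto hlim (eventually_nhdsWithin_of_forall h)

lemma eq_zero_of_forall_pos_add_le_add_mul {a b : ℝ} (h : ∀ t > 0, a + b ≤ a + t * b) :
    b = 0 := by
  have hb_nonneg : 0 ≤ b := by linarith [h 2 two_pos]
  have hb_nonpos : b ≤ 0 := by linarith [le_of_forall_pos_le_add_mul h]
  exact le_antisymm hb_nonpos hb_nonneg

lemma eq_apply_zero_of_pos_smul_invariant {E β : Type*} [TopologicalSpace E] [AddCommGroup E]
    [Module ℝ E] [ContinuousSMul ℝ E] [TopologicalSpace β] [T2Space β] {φ : E → β}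
    (hφ : Continuous φ) (hinv : ∀ c : ℝ, 0 < c → ∀ x, φ (c • x) = φ x) (x : E) :
    φ x = φ 0 := by
  have hlim : Tendsto (fun c : ℝ => φ (c • x)) (𝓝[>] 0) (𝓝 (φ 0)) := by
    have : Tendsto (fun c : ℝ => φ (c • x)) (𝓝 0) (𝓝 (φ ((0 : ℝ) • x))) :=
      (hφ.comp (continuous_id.smul continuous_const)).tendsto 0
    simpa using this.mono_left nhdsWithin_le_nhds
  have hconst : Tendsto (fun c : ℝ => φ (c • x)) (𝓝[>] 0) (𝓝 (φ x)) :=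
    tendsto_const_nhds.congr' <| eventually_nhdsWithin_of_forall fun c hc => (hinv c hc x).symm
  exact tendsto_nhds_unique hconst hlim

lemma apply_smul_smul_inv_of_diagonal_invariant {m₁ m₂ n β : Type*} [Fintype n] [DecidableEq n]
    {f : Matrix m₁ n ℝ → Matrix m₂ n ℝ → β}
    (hinv : ∀ X₁ X₂ (d : n → ℝ), (∀ q, 0 < d q) →
      f (X₁ * Matrix.diagonal d) (X₂ * Matrix.diagonal fun q => (d q)⁻¹) = f X₁ X₂)
    {c : ℝ} (hc : 0 < c) (X₁ : Matrix m₁ n ℝ) (X₂ : Matrix m₂ n ℝ) :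
    f (c • X₁) (c⁻¹ • X₂) = f X₁ X₂ := by
  rw [Matrix.smul_eq_mul_diagonal, Matrix.smul_eq_mul_diagonal]
  exact hinv X₁ X₂ (fun _ => c) fun _ => hc

theorem stmt9_general {m₁ m₂ r : ℕ}
    (f : Matrix (Fin m₁) (Fin r) ℝ → Matrix (Fin m₂) (Fin r) ℝ → ℝ)
    (hfc : Continuous fun P : Matrix (Fin m₁) (Fin r) ℝ × Matrix (Fin m₂) (Fin r) ℝ =>
      f P.1 P.2)
    (hinv : ∀ X₁ X₂ (d : Fin r → ℝ), (∀ q, 0 < d q) →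
      f (X₁ * Matrix.diagonal d) (X₂ * Matrix.diagonal fun q => (d q)⁻¹) = f X₁ X₂)
    (g : Matrix (Fin m₁) (Fin r) ℝ → ℝ) (p : ℝ) (hp : 0 < p)
    (hgh : ∀ c : ℝ, 0 < c → ∀ X, g (c • X) = c ^ p * g X)
    (hgd : ∀ X, g X = 0 ↔ X = 0)
    (μ : ℝ) (hμ : 0 < μ)
    (X₁s : Matrix (Fin m₁) (Fin r) ℝ) (X₂s : Matrix (Fin m₂) (Fin r) ℝ)
    (hmin : IsLeast {y : ℝ | ∃ X₁ X₂, y = f X₁ X₂ + μ * g X₁}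
      (f X₁s X₂s + μ * g X₁s)) :
    X₁s = 0 ∧ f 0 X₂s = f 0 0 ∧
      f 0 X₂s = sInf {y : ℝ | ∃ X₁ X₂, y = f X₁ X₂} := by
  have hrescaled : ∀ X₁ X₂, ∀ t > 0, f X₁s X₂s + μ * g X₁s ≤ f X₁ X₂ + t * (μ * g X₁) := by
    intro X₁ X₂ t ht
    have hc : 0 < t ^ p⁻¹ := Real.rpow_pos_of_pos ht _
    have := hmin.2 ⟨(t ^ p⁻¹) • X₁, (t ^ p⁻¹)⁻¹ • X₂, rfl⟩
    rwa [apply_smul_smul_inv_of_diagonal_invariant hinv hc, hgh _ hc,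
      Real.rpow_inv_rpow ht.le hp.ne', mul_left_comm] at this
  have hgX₁s : μ * g X₁s = 0 := eq_zero_of_forall_pos_add_le_add_mul (hrescaled X₁s X₂s)
  have hX₁s : X₁s = 0 := (hgd X₁s).1 <| (mul_eq_zero.1 hgX₁s).resolve_left hμ.ne'
  have hleast : IsLeast {y : ℝ | ∃ X₁ X₂, y = f X₁ X₂} (f 0 X₂s) := by
    refine ⟨⟨0, X₂s, rfl⟩, ?_⟩
    rintro y ⟨X₁, X₂, rfl⟩
    have := le_of_forall_pos_le_add_mul (hrescaled X₁ X₂)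
    rwa [hgX₁s, add_zero, hX₁s] at this
  have hf_smul : ∀ c : ℝ, 0 < c → ∀ X₂, f 0 (c • X₂) = f 0 X₂ := fun c hc X₂ => by
    simpa using apply_smul_smul_inv_of_diagonal_invariant hinv (inv_pos.2 hc) 0 X₂
  exact ⟨hX₁s, eq_apply_zero_of_pos_smul_invariant (hfc.comp (Continuous.prodMk_right 0)) hf_smul X₂s,
    hleast.csInf_eq.symm⟩

theorem stmt9 {m₁ m₂ r : ℕ}
    (f : Matrix (Fin m₁) (Fin r) ℝ → Matrix (Fin m₂) (Fin r) ℝ → ℝ)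
    (hf0 : ∀ X₁ X₂, 0 ≤ f X₁ X₂)
    (hfc : Continuous fun P : Matrix (Fin m₁) (Fin r) ℝ × Matrix (Fin m₂) (Fin r) ℝ =>
      f P.1 P.2)
    (hinv : ∀ X₁ X₂ (d : Fin r → ℝ), (∀ q, 0 < d q) →
      f (X₁ * Matrix.diagonal d) (X₂ * Matrix.diagonal fun q => (d q)⁻¹) = f X₁ X₂)
    (g : Matrix (Fin m₁) (Fin r) ℝ → ℝ) (p : ℝ) (hp : 0 < p)
    (hg0 : ∀ X, 0 ≤ g X)
    (hgh : ∀ c : ℝ, 0 < c → ∀ X, g (c • X) = c ^ p * g X)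
    (hgd : ∀ X, g X = 0 ↔ X = 0)
    (μ : ℝ) (hμ : 0 < μ)
    (X₁s : Matrix (Fin m₁) (Fin r) ℝ) (X₂s : Matrix (Fin m₂) (Fin r) ℝ)
    (hmin : IsLeast {y : ℝ | ∃ X₁ X₂, y = f X₁ X₂ + μ * g X₁}
      (f X₁s X₂s + μ * g X₁s)) :
    X₁s = 0 ∧ f 0 X₂s = f 0 0 ∧
      f 0 X₂s = sInf {y : ℝ | ∃ X₁ X₂, y = f X₁ X₂} :=
  stmt9_general f hfc hinv g p hp hgh hgd μ hμ X₁s X₂s hmin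
end

section
/- Fix y > 0. For λ with 0 < λ ≤ y, the function f(x₁, x₂) = (y − x₁x₂)² + λ(x₁² + x₂²) over ℝ² attains its minimum value 2λy − λ², attained at x₁ = x₂ = √(y − λ) (and at x₁ = x₂ = −√(y − λ)). -/
/-! Completing the square gives
`(y - x₁x₂)² + λ(x₁² + x₂²) = 2λy - λ² + (y - λ - x₁x₂)² + λ(x₁ - x₂)²`,
so for `λ ≥ 0` the value `2λy - λ²` is a lower bound, attained exactly when `x₁ = x₂ = t`
with `t² = y - λ`, which has the solutions `t = ±√(y - λ)` once `λ ≤ y`. -/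

lemma sq_sub_mul_add_mul_sq_add_sq_eq (y l x₁ x₂ : ℝ) :
    (y - x₁ * x₂) ^ 2 + l * (x₁ ^ 2 + x₂ ^ 2) =
      2 * l * y - l ^ 2 + ((y - l - x₁ * x₂) ^ 2 + l * (x₁ - x₂) ^ 2) := by
  ring

lemma le_sq_sub_mul_add_mul_sq_add_sq {l : ℝ} (hl : 0 ≤ l) (y x₁ x₂ : ℝ) :
    2 * l * y - l ^ 2 ≤ (y - x₁ * x₂) ^ 2 + l * (x₁ ^ 2 + x₂ ^ 2) := by
  rw [sq_sub_mul_add_mul_sq_add_sq_eq]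
  exact le_add_of_nonneg_right (by positivity)

lemma sq_sub_mul_self_add_mul_sq_add_sq_of_sq_eq {y l t : ℝ} (ht : t ^ 2 = y - l) :
    (y - t * t) ^ 2 + l * (t ^ 2 + t ^ 2) = 2 * l * y - l ^ 2 := by
  rw [← sq, ht]
  ring

theorem stmt10_general (y l : ℝ) (hl : 0 < l) (hly : l ≤ y) :
    IsLeast {v : ℝ | ∃ x₁ x₂ : ℝ, v = (y - x₁ * x₂) ^ 2 + l * (x₁ ^ 2 + x₂ ^ 2)}
      (2 * l * y - l ^ 2) ∧
    (y - Real.sqrt (y - l) * Real.sqrt (y - l)) ^ 2 +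
        l * (Real.sqrt (y - l) ^ 2 + Real.sqrt (y - l) ^ 2) = 2 * l * y - l ^ 2 ∧
    (y - (-Real.sqrt (y - l)) * (-Real.sqrt (y - l))) ^ 2 +
        l * ((-Real.sqrt (y - l)) ^ 2 + (-Real.sqrt (y - l)) ^ 2) =
      2 * l * y - l ^ 2 := by
  have hsqrt : Real.sqrt (y - l) ^ 2 = y - l := Real.sq_sqrt (sub_nonneg.mpr hly)
  have hneg : (-Real.sqrt (y - l)) ^ 2 = y - l := by rw [neg_sq, hsqrt]
  have hmin := sq_sub_mul_self_add_mul_sq_add_sq_of_sq_eq hsqrt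
  refine ⟨⟨⟨_, _, hmin.symm⟩, ?_⟩, hmin, sq_sub_mul_self_add_mul_sq_add_sq_of_sq_eq hneg⟩
  rintro v ⟨x₁, x₂, rfl⟩
  exact le_sq_sub_mul_add_mul_sq_add_sq hl.le y x₁ x₂

theorem stmt10 (y l : ℝ) (hy : 0 < y) (hl : 0 < l) (hly : l ≤ y) :
    IsLeast {v : ℝ | ∃ x₁ x₂ : ℝ, v = (y - x₁ * x₂) ^ 2 + l * (x₁ ^ 2 + x₂ ^ 2)}
      (2 * l * y - l ^ 2) ∧
    (y - Real.sqrt (y - l) * Real.sqrt (y - l)) ^ 2 +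
        l * (Real.sqrt (y - l) ^ 2 + Real.sqrt (y - l) ^ 2) = 2 * l * y - l ^ 2 ∧
    (y - (-Real.sqrt (y - l)) * (-Real.sqrt (y - l))) ^ 2 +
        l * ((-Real.sqrt (y - l)) ^ 2 + (-Real.sqrt (y - l)) ^ 2) =
      2 * l * y - l ^ 2 :=
  stmt10_general y l hl hly
end

section
/- Let {X_i}_{i≤n} be matrices with X_i ∈ ℝ^{m_i × r}, let μ_i > 0, let g_i : ℝ^{m_i} → ℝ₊ be positive homogeneous of degree p_i > 0 and positive-definite, and let f be scale-invariant in the sense that f({X_iΛ_i}) = f({X_i}) whenever the Λ_i are positive diagonal matrices with ∏ Λ_i = I_r. Then the balanced matrices X̃_i[:,q] = (β_q/(p_i μ_i g_i(X_i[:,q])))^{1/p_i} X_i[:,q], with β_q the weighted geometric mean of {p_i μ_i g_i(X_i[:,q])}, satisfy f({X̃_i}) + ∑_i μ_i ∑_q g_i(X̃_i[:,q]) ≤ f({X_i}) + ∑_i μ_i ∑_q g_i(X_i[:,q]), provided all columns X_i[:,q] are nonzero. -/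
open Finset

theorem stmt17 {n r : ℕ} (hn : 1 ≤ n) (hr : 1 ≤ r) (m : Fin n → ℕ)
    (f : (∀ i, Matrix (Fin (m i)) (Fin r) ℝ) → ℝ)
    (g : ∀ i : Fin n, (Fin (m i) → ℝ) → ℝ)
    (p μ : Fin n → ℝ) (hp : ∀ i, 0 < p i) (hμ : ∀ i, 0 < μ i)
    (hg0 : ∀ i x, 0 ≤ g i x)
    (hgh : ∀ (i : Fin n) (c : ℝ), 0 < c → ∀ x : Fin (m i) → ℝ,
      g i (fun k => c * x k) = c ^ p i * g i x)
    (hgd : ∀ (i : Fin n) (x : Fin (m i) → ℝ), g i x = 0 ↔ x = 0)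
    (hinv : ∀ (X : ∀ i, Matrix (Fin (m i)) (Fin r) ℝ) (Λ : ∀ _ : Fin n, Fin r → ℝ),
      (∀ i q, 0 < Λ i q) → (∀ q, ∏ i, Λ i q = 1) →
      f (fun i => Matrix.of fun k q => Λ i q * X i k q) = f X)
    (X : ∀ i, Matrix (Fin (m i)) (Fin r) ℝ)
    (hX : ∀ (i : Fin n) (q : Fin r), (fun k => X i k q) ≠ 0) :
    let β : Fin r → ℝ := fun q =>
      (∏ i, (p i * μ i * g i fun k => X i k q) ^ (1 / p i)) ^ (1 / ∑ i, 1 / p i)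
    let Xb : ∀ i, Matrix (Fin (m i)) (Fin r) ℝ := fun i =>
      Matrix.of fun k q =>
        (β q / (p i * μ i * g i fun k' => X i k' q)) ^ (1 / p i) * X i k q
    f Xb + ∑ i, μ i * ∑ q, g i (fun k => Xb i k q) ≤
      f X + ∑ i, μ i * ∑ q, g i fun k => X i k q := by
  intro β Xb
  set G : Fin n → Fin r → ℝ := fun i q => g i (fun k => X i k q) with hG
  have hGpos : ∀ i q, 0 < G i q := fun i q =>
    lt_of_le_of_ne (hg0 i _) (fun h => hX i q ((hgd i _).1 h.symm))
  set A : Fin n → Fin r → ℝ := fun i q => p i * μ i * G i q with hA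
  have hApos : ∀ i q, 0 < A i q := fun i q =>
    mul_pos (mul_pos (hp i) (hμ i)) (hGpos i q)
  set W : ℝ := ∑ i, 1 / p i with hW
  have hWpos : 0 < W :=
    Finset.sum_pos (fun i _ => by have := hp i; positivity)
      ⟨⟨0, hn⟩, Finset.mem_univ _⟩
  have hβprod : ∀ q, β q = (∏ i, (A i q) ^ (1 / p i)) ^ (1 / W) := fun q => rfl
  have hβpos : ∀ q, 0 < β q := fun q => by
    rw [hβprod]
    exact Real.rpow_pos_of_pos
      (Finset.prod_pos fun i _ => Real.rpow_pos_of_pos (hApos i q) _) _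
  set Λ : Fin n → Fin r → ℝ := fun i q => (β q / A i q) ^ (1 / p i) with hΛ
  have hΛpos : ∀ i q, 0 < Λ i q := fun i q =>
    Real.rpow_pos_of_pos (div_pos (hβpos q) (hApos i q)) _
  have hPpos : ∀ q, 0 < ∏ i, (A i q) ^ (1 / p i) := fun q =>
    Finset.prod_pos fun i _ => Real.rpow_pos_of_pos (hApos i q) _
  have hΛprod : ∀ q, ∏ i, Λ i q = 1 := by
    intro q
    have h1 : ∏ i, Λ i q = (β q) ^ W / ∏ i, (A i q) ^ (1 / p i) := by
      have : ∀ i : Fin n, Λ i q = (β q) ^ (1 / p i) / (A i q) ^ (1 / p i) := fun i =>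
        Real.div_rpow (hβpos q).le (hApos i q).le _
      rw [Finset.prod_congr rfl fun i _ => this i, Finset.prod_div_distrib,
        ← Real.rpow_sum_of_pos (hβpos q), ← hW]
    have h2 : (β q) ^ W = ∏ i, (A i q) ^ (1 / p i) := by
      rw [hβprod, ← Real.rpow_mul (hPpos q).le, one_div,
        inv_mul_cancel₀ (ne_of_gt hWpos), Real.rpow_one]
    rw [h1, h2, div_self (ne_of_gt (hPpos q))]
  have hfeq : f Xb = f X := by
    have hXb : Xb = fun i => Matrix.of fun k q => Λ i q * X i k q := rfl
    rw [hXb, hinv X Λ hΛpos hΛprod]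
  have hgb : ∀ i q, g i (fun k => Xb i k q) = β q / (p i * μ i) := by
    intro i q
    have h0 : (fun k => Xb i k q) = fun k => Λ i q * X i k q := rfl
    rw [h0, hgh i _ (hΛpos i q)]
    have hΛp : Λ i q ^ p i = β q / A i q := by
      rw [hΛ]
      simp only
      rw [← Real.rpow_mul (div_pos (hβpos q) (hApos i q)).le, one_div,
        inv_mul_cancel₀ (ne_of_gt (hp i)), Real.rpow_one]
    rw [hΛp, hA]
    simp only
    rw [div_mul_eq_mul_div, mul_comm (p i * μ i) (G i q), ← div_div,
      mul_div_assoc, div_self (ne_of_gt (hGpos i q)), mul_one]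
  -- AM-GM per column
  have hamgm : ∀ q, β q * W ≤ ∑ i, μ i * G i q := by
    intro q
    have h := Real.geom_mean_le_arith_mean Finset.univ (fun i => 1 / p i)
      (fun i => A i q) (fun i _ => by have := hp i; positivity)
      (by rw [← hW]; exact hWpos) (fun i _ => (hApos i q).le)
    rw [← hW] at h
    have hlhs : (∏ i, (A i q) ^ (1 / p i)) ^ W⁻¹ = β q := by
      rw [hβprod, one_div]
    have hrhs : ∑ i, (1 / p i) * A i q = ∑ i, μ i * G i q := by
      refine Finset.sum_congr rfl fun i _ => ?_
      rw [hA]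
      have h1 := (hp i).ne'
      field_simp
    rw [hlhs, hrhs] at h
    calc β q * W ≤ ((∑ i, μ i * G i q) / W) * W := by
          exact mul_le_mul_of_nonneg_right h hWpos.le
      _ = ∑ i, μ i * G i q := div_mul_cancel₀ _ (ne_of_gt hWpos)
  -- assemble
  rw [hfeq]
  have hpen : ∑ i, μ i * ∑ q, g i (fun k => Xb i k q) = ∑ q, β q * W := by
    have : ∀ i, μ i * ∑ q, g i (fun k => Xb i k q) = ∑ q, β q * (1 / p i) := by
      intro i
      rw [Finset.mul_sum]
      refine Finset.sum_congr rfl fun q _ => ?_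
      rw [hgb i q]
      have h1 := (hp i).ne'
      have h2 := (hμ i).ne'
      field_simp
    rw [Finset.sum_congr rfl fun i _ => this i, Finset.sum_comm]
    exact Finset.sum_congr rfl fun q _ => by rw [← Finset.mul_sum, ← hW]
  have hpen2 : ∑ q, β q * W ≤ ∑ i, μ i * ∑ q, G i q := by
    have := Finset.sum_le_sum (fun q (_ : q ∈ Finset.univ) => hamgm q)
    refine this.trans_eq ?_
    rw [Finset.sum_comm]
    exact Finset.sum_congr rfl fun i _ => (Finset.mul_sum _ _ _).symm
  rw [hpen]
  linarith
end
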